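/- arXiv:2604.10864 — 8 statements merged into one kernel-verified Lean document; each statement's English description precedes it below -/
import Mathlib

section
/- Let d ≥ 1 and let G be a d-degenerate finite simple graph with m edges. Then G contains an independent set J of vertices such that d·(d+1)²·|J| ≥ m and every vertex v ∈ J satisfies 1 ≤ deg_G(v) ≤ 2d. -/
/-- A finite simple graph `G` is `d`-degenerate if its vertices can be enumerated
`v_1, …, v_n` so that each `v_i` has at most `d` neighbors among `{v_j : j > i}`. -/
def IsDegenerate {V : Type*} [Fintype V] (G : SimpleGraph V) [DecidableRel G.Adj]
    (d : ℕ) : Prop :=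
  ∃ e : Fin (Fintype.card V) ≃ V, ∀ i : Fin (Fintype.card V),
    (Finset.univ.filter fun j : Fin (Fintype.card V) =>
      i < j ∧ G.Adj (e i) (e j)).card ≤ d

open Finset in
private lemma greedy_indep {V : Type*} [Fintype V] [DecidableEq V]
    (G : SimpleGraph V) [DecidableRel G.Adj] (d : ℕ) (T : Finset V) :
    ∃ J : Finset V, J ⊆ T ∧ (∀ u ∈ J, ∀ v ∈ J, ¬ G.Adj u v) ∧
      (2*d+1) * T.card ≤ (d+1)^2 * J.card + ∑ v ∈ T, (T.filter (G.Adj v)).card := by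
  induction T using Finset.strongInductionOn with
  | _ T IH =>
  rcases T.eq_empty_or_nonempty with rfl | hne
  · exact ⟨∅, by simp⟩
  obtain ⟨v, hvT, hmin⟩ := T.exists_min_image (fun v => (T.filter (G.Adj v)).card) hne
  set Nv := T.filter (G.Adj v) with hNv
  set k := Nv.card with hk
  have hvNv : v ∉ Nv := by simp [hNv, G.irrefl]
  have hins : insert v Nv ⊆ T := insert_subset hvT (filter_subset _ _)
  set T' := T \ insert v Nv with hT'
  have hT'ss : T' ⊂ T := by
    refine ssubset_iff_of_subset (sdiff_subset) |>.mpr ⟨v, hvT, by simp [hT']⟩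
  obtain ⟨J, hJT', hJind, hJcard⟩ := IH T' hT'ss
  have hvJ : v ∉ J := fun h => by
    have := hJT' h; simp [hT'] at this
  refine ⟨insert v J, insert_subset hvT (hJT'.trans sdiff_subset), ?_, ?_⟩
  · intro u hu w hw
    have hnadj : ∀ w ∈ J, ¬ G.Adj v w := by
      intro w hw hadj
      have hwT' := hJT' hw
      simp only [hT', mem_sdiff, mem_insert] at hwT'
      exact hwT'.2 (Or.inr (by simp [hNv, hwT'.1, hadj]))
    intro hadj
    rcases mem_insert.mp hu with hu | hu <;> rcases mem_insert.mp hw with hw | hw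
    · exact G.irrefl (hu ▸ hw ▸ hadj)
    · exact hnadj w hw (hu ▸ hadj)
    · exact hnadj u hu (hw ▸ hadj).symm
    · exact hJind u hu w hw hadj
  · -- cardinality bound
    have hcins : (insert v Nv).card = k + 1 := by
      rw [card_insert_of_notMem hvNv]
    have hcT : T.card = T'.card + (k + 1) := by
      rw [hT', card_sdiff_of_subset hins, hcins]
      have := card_le_card hins
      omega
    have hcard : (insert v J).card = J.card + 1 := by
      rw [card_insert_of_notMem hvJ]
    -- sum splitting
    have hsum1 : ∑ u ∈ T, (T.filter (G.Adj u)).card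
        = ∑ u ∈ T', (T.filter (G.Adj u)).card + ∑ u ∈ insert v Nv, (T.filter (G.Adj u)).card := by
      rw [hT', sum_sdiff hins]
    have hsum2 : ∑ u ∈ T', (T'.filter (G.Adj u)).card ≤ ∑ u ∈ T', (T.filter (G.Adj u)).card :=
      sum_le_sum fun u _ => card_le_card (filter_subset_filter _ sdiff_subset)
    have hsum3 : (k+1) * k ≤ ∑ u ∈ insert v Nv, (T.filter (G.Adj u)).card := by
      calc (k+1) * k = ∑ _u ∈ insert v Nv, k := by rw [sum_const, hcins, smul_eq_mul]
      _ ≤ _ := sum_le_sum fun u hu => hmin u (hins hu)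
    have hkey : (2*d+1) * (k+1) ≤ (d+1)^2 + k*(k+1) := by nlinarith [sq_nonneg ((k:ℤ) - d)]
    calc (2*d+1) * T.card = (2*d+1) * T'.card + (2*d+1)*(k+1) := by rw [hcT]; ring
    _ ≤ ((d+1)^2 * J.card + ∑ u ∈ T', (T'.filter (G.Adj u)).card) + ((d+1)^2 + k*(k+1)) := by
        exact Nat.add_le_add hJcard hkey
    _ ≤ (d+1)^2 * (insert v J).card + ∑ u ∈ T, (T.filter (G.Adj u)).card := by
        rw [hcard, hsum1]; nlinarith [hsum2, hsum3]

open Finset in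
private lemma degen_count{V : Type*} [Fintype V] [DecidableEq V]
    (G : SimpleGraph V) [DecidableRel G.Adj] (d : ℕ) (hdeg : IsDegenerate G d)
    (A : Finset V) :
    ∑ v ∈ A, (A.filter (G.Adj v)).card ≤ 2 * d * A.card := by
  obtain ⟨e, he⟩ := hdeg
  set F : Fin (Fintype.card V) → Fin (Fintype.card V) → ℕ :=
    fun i j => if e i ∈ A ∧ e j ∈ A ∧ G.Adj (e i) (e j) then 1 else 0 with hF
  have hFsymm : ∀ i j, F i j = F j i := by
    intro i j
    simp only [hF]
    by_cases h : e i ∈ A ∧ e j ∈ A ∧ G.Adj (e i) (e j)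
    · rw [if_pos h, if_pos ⟨h.2.1, h.1, h.2.2.symm⟩]
    · rw [if_neg h, if_neg (fun h' => h ⟨h'.2.1, h'.1, h'.2.2.symm⟩)]
  set f : V → ℕ := fun v => ∑ w : V, if v ∈ A ∧ w ∈ A ∧ G.Adj v w then 1 else 0 with hf
  have hzero : ∀ v, v ∉ A → f v = 0 := by
    intro v hv
    exact Finset.sum_eq_zero fun w _ => by simp [hv]
  have hval : ∀ v ∈ A, f v = (A.filter (G.Adj v)).card := by
    intro v hv
    simp only [hf, hv, true_and]
    have : ∀ w ∈ (univ : Finset V), (if w ∈ A ∧ G.Adj v w then 1 else 0)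
        = if w ∈ A then (if G.Adj v w then 1 else 0) else 0 :=
      fun w _ => ite_and _ _ _ _
    rw [Finset.sum_congr rfl this, Finset.sum_ite_mem, univ_inter, card_filter]
  -- step 1 : transfer the sum
  have step1 : ∑ v ∈ A, (A.filter (G.Adj v)).card
      = ∑ i : Fin (Fintype.card V), ∑ j : Fin (Fintype.card V), F i j := by
    calc ∑ v ∈ A, (A.filter (G.Adj v)).card
        = ∑ v ∈ A, f v := Finset.sum_congr rfl fun v hv => (hval v hv).symm
      _ = ∑ v : V, f v := by
          rw [← univ_inter A, ← Finset.sum_ite_mem univ A f]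
          refine Finset.sum_congr rfl fun v _ => ?_
          by_cases hv : v ∈ A
          · rw [if_pos hv]
          · rw [if_neg hv, hzero v hv]
      _ = ∑ i : Fin (Fintype.card V), ∑ j : Fin (Fintype.card V), F i j := by
          rw [← Equiv.sum_comp e f]
          refine Finset.sum_congr rfl fun i _ => ?_
          simp only [hf]
          rw [← Equiv.sum_comp e (fun w => if e i ∈ A ∧ w ∈ A ∧ G.Adj (e i) w then 1 else 0)]
  -- step 2 : split by order
  have split : ∀ i j, F i j
      = (if i < j then F i j else 0) + (if j < i then F i j else 0) := by
    intro i j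
    rcases lt_trichotomy i j with h | h | h
    · simp [h, not_lt_of_gt h]
    · subst h
      simp [hF, G.irrefl]
    · simp [h, not_lt_of_gt h]
  have step2 : ∑ i : Fin (Fintype.card V), ∑ j : Fin (Fintype.card V), F i j
      = 2 * ∑ i : Fin (Fintype.card V), ∑ j : Fin (Fintype.card V), if i < j then F i j else 0 := by
    have e1 : ∑ i : Fin (Fintype.card V), ∑ j : Fin (Fintype.card V), F i j
        = (∑ i : Fin (Fintype.card V), ∑ j : Fin (Fintype.card V), if i < j then F i j else 0)
          + ∑ i : Fin (Fintype.card V), ∑ j : Fin (Fintype.card V), if j < i then F i j else 0 := by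
      rw [← Finset.sum_add_distrib]
      refine Finset.sum_congr rfl fun i _ => ?_
      rw [← Finset.sum_add_distrib]
      exact Finset.sum_congr rfl fun j _ => split i j
    have e2 : ∑ i : Fin (Fintype.card V), ∑ j : Fin (Fintype.card V), (if j < i then F i j else 0)
        = ∑ i : Fin (Fintype.card V), ∑ j : Fin (Fintype.card V), if i < j then F i j else 0 := by
      rw [Finset.sum_comm]
      refine Finset.sum_congr rfl fun j _ => Finset.sum_congr rfl fun i _ => ?_
      rw [hFsymm]
    rw [e1, e2]; ring
  -- step 3 : bound the ordered sum
  have step3 : ∑ i : Fin (Fintype.card V), ∑ j : Fin (Fintype.card V), (if i < j then F i j else 0)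
      ≤ d * A.card := by
    have hbound : ∀ i, ∑ j : Fin (Fintype.card V), (if i < j then F i j else 0)
        ≤ if e i ∈ A then d else 0 := by
      intro i
      by_cases hi : e i ∈ A
      · rw [if_pos hi]
        calc ∑ j : Fin (Fintype.card V), (if i < j then F i j else 0)
            ≤ ∑ j : Fin (Fintype.card V), (if i < j ∧ G.Adj (e i) (e j) then 1 else 0) := by
              refine Finset.sum_le_sum fun j _ => ?_
              by_cases h1 : i < j
              · rw [if_pos h1]
                simp only [hF]
                by_cases h2 : e i ∈ A ∧ e j ∈ A ∧ G.Adj (e i) (e j)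
                · rw [if_pos h2, if_pos ⟨h1, h2.2.2⟩]
                · rw [if_neg h2]; positivity
              · rw [if_neg h1, if_neg (fun h => h1 h.1)]
          _ = (Finset.univ.filter fun j => i < j ∧ G.Adj (e i) (e j)).card := by
              rw [card_filter]
          _ ≤ d := he i
      · rw [if_neg hi]
        refine le_of_eq (Finset.sum_eq_zero fun j _ => ?_)
        by_cases h1 : i < j
        · rw [if_pos h1]; simp [hF, hi]
        · rw [if_neg h1]
    calc ∑ i : Fin (Fintype.card V), ∑ j : Fin (Fintype.card V), (if i < j then F i j else 0)
        ≤ ∑ i : Fin (Fintype.card V), (if e i ∈ A then d else 0) :=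
          Finset.sum_le_sum fun i _ => hbound i
      _ = d * A.card := by
          rw [← Finset.sum_filter, Finset.sum_const, smul_eq_mul]
          have : (univ.filter fun i => e i ∈ A).card = A.card := by
            refine Finset.card_nbij e (fun i hi => by simpa using hi) ?_ ?_
            · exact fun a _ b _ h => e.injective h
            · intro a ha
              exact ⟨e.symm a, by simpa using ha, by simp⟩
          rw [this, mul_comm]
  calc ∑ v ∈ A, (A.filter (G.Adj v)).card
      = 2 * ∑ i : Fin (Fintype.card V), ∑ j : Fin (Fintype.card V), (if i < j then F i j else 0) := by
        rw [step1, step2]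
    _ ≤ 2 * (d * A.card) := Nat.mul_le_mul_left 2 step3
    _ = 2 * d * A.card := by ring

open Finset in
theorem stmt_1 {V : Type*} [Fintype V] [DecidableEq V]
    (G : SimpleGraph V) [DecidableRel G.Adj] (d : ℕ) (hd : 1 ≤ d)
    (hdeg : IsDegenerate G d) :
    ∃ J : Finset V,
      (∀ u ∈ J, ∀ v ∈ J, ¬ G.Adj u v) ∧
      G.edgeFinset.card ≤ d * (d + 1) ^ 2 * J.card ∧
      ∀ v ∈ J, 1 ≤ G.degree v ∧ G.degree v ≤ 2 * d := by
  classical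
  set N' : Finset V := univ.filter (fun v => 0 < G.degree v) with hN'
  set S : Finset V := N'.filter (fun v => G.degree v ≤ 2*d) with hS
  set H : Finset V := N'.filter (fun v => ¬ G.degree v ≤ 2*d) with hH
  -- neighbors are non-isolated
  have hnbr : ∀ v : V, univ.filter (G.Adj v) = N'.filter (G.Adj v) := by
    intro v
    ext w
    simp only [hN', mem_filter, mem_univ, true_and]
    constructor
    · intro hadj
      exact ⟨G.degree_pos_iff_exists_adj w |>.mpr ⟨v, hadj.symm⟩, hadj⟩
    · exact fun h => h.2
  have hdegeq : ∀ v : V, G.degree v = (N'.filter (G.Adj v)).card := by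
    intro v
    rw [← hnbr, ← SimpleGraph.neighborFinset_eq_filter]
    rfl
  -- split degree by S/H
  have hsplit : ∀ v : V, G.degree v
      = (S.filter (G.Adj v)).card + (H.filter (G.Adj v)).card := by
    intro v
    rw [hdegeq v, ← Finset.card_filter_add_card_filter_not
      (s := N'.filter (G.Adj v)) (fun w => G.degree w ≤ 2*d)]
    rw [hS, hH, Finset.filter_comm, Finset.filter_comm (fun w => ¬ G.degree w ≤ 2*d)]
  -- handshake, and isolated vertices contribute nothing
  have hhs : ∑ v ∈ N', G.degree v = 2 * G.edgeFinset.card := by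
    rw [← SimpleGraph.sum_degrees_eq_twice_card_edges]
    rw [← univ_inter N']
    rw [← Finset.sum_ite_mem univ N' (fun v => G.degree v)]
    refine Finset.sum_congr rfl fun v _ => ?_
    by_cases hv : v ∈ N'
    · rw [if_pos hv]
    · rw [if_neg hv]
      simp only [hN', mem_filter, mem_univ, true_and, not_lt, Nat.le_zero] at hv
      omega
  -- m ≤ d * (s + h)
  have hcards : S.card + H.card = N'.card :=
    Finset.card_filter_add_card_filter_not _
  have hm : 2 * G.edgeFinset.card ≤ 2 * d * (S.card + H.card) := by
    rw [← hhs, hcards]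
    calc ∑ v ∈ N', G.degree v = ∑ v ∈ N', (N'.filter (G.Adj v)).card :=
          Finset.sum_congr rfl fun v _ => hdegeq v
      _ ≤ 2 * d * N'.card := degen_count G d hdeg N'
  -- h ≤ E(H,S)
  have hHdeg : (2*d+1) * H.card ≤ ∑ v ∈ H, G.degree v := by
    calc (2*d+1) * H.card = ∑ _v ∈ H, (2*d+1) := by rw [sum_const, smul_eq_mul, mul_comm]
      _ ≤ ∑ v ∈ H, G.degree v := Finset.sum_le_sum fun v hv => by
          simp only [hH, mem_filter] at hv; omega
  have hHsplit : ∑ v ∈ H, G.degree v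
      = ∑ v ∈ H, (S.filter (G.Adj v)).card + ∑ v ∈ H, (H.filter (G.Adj v)).card := by
    rw [← Finset.sum_add_distrib]
    exact Finset.sum_congr rfl fun v _ => hsplit v
  have hHH : ∑ v ∈ H, (H.filter (G.Adj v)).card ≤ 2 * d * H.card := degen_count G d hdeg H
  have hHle : H.card ≤ ∑ v ∈ H, (S.filter (G.Adj v)).card := by
    have expand : (2*d+1)*H.card = 2*d*H.card + H.card := by ring
    omega
  -- symmetry of edge counting
  have hsym : ∑ v ∈ H, (S.filter (G.Adj v)).card = ∑ v ∈ S, (H.filter (G.Adj v)).card := by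
    have l : ∀ (P Q : Finset V), ∑ v ∈ P, (Q.filter (G.Adj v)).card
        = ∑ v ∈ P, ∑ w ∈ Q, if G.Adj v w then 1 else 0 :=
      fun P Q => Finset.sum_congr rfl fun v _ => card_filter _ _
    rw [l, l, Finset.sum_comm]
    refine Finset.sum_congr rfl fun v _ => Finset.sum_congr rfl fun w _ => ?_
    exact if_congr (G.adj_comm w v) rfl rfl
  -- S degree bound
  have hSdeg : ∑ v ∈ S, (S.filter (G.Adj v)).card + ∑ v ∈ S, (H.filter (G.Adj v)).card
      ≤ 2 * d * S.card := by
    calc ∑ v ∈ S, (S.filter (G.Adj v)).card + ∑ v ∈ S, (H.filter (G.Adj v)).card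
        = ∑ v ∈ S, G.degree v := by
          rw [← Finset.sum_add_distrib]
          exact (Finset.sum_congr rfl fun v _ => (hsplit v).symm)
      _ ≤ ∑ _v ∈ S, 2*d := Finset.sum_le_sum fun v hv => by
          simp only [hS, mem_filter] at hv; exact hv.2
      _ = 2 * d * S.card := by rw [sum_const, smul_eq_mul, mul_comm]
  -- greedy on S
  obtain ⟨J, hJS, hJind, hJcard⟩ := greedy_indep G d S
  refine ⟨J, hJind, ?_, ?_⟩
  · -- arithmetic
    set m := G.edgeFinset.card
    set s := S.card
    set h := H.card
    set j := J.card
    set eSS := ∑ v ∈ S, (S.filter (G.Adj v)).card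
    set eSH := ∑ v ∈ S, (H.filter (G.Adj v)).card
    rw [hsym] at hHle
    -- hm : 2m ≤ 2d(s+h), hHle : h ≤ eSH, hSdeg : eSS + eSH ≤ 2ds,
    -- hJcard : (2d+1)s ≤ (d+1)²j + eSS.  Goal: m ≤ d(d+1)²j
    nlinarith [Nat.mul_le_mul_left (2*d) hHle, Nat.mul_le_mul_left (2*d) hSdeg,
      Nat.mul_le_mul_left (2*d) hJcard, hm]
  · intro v hv
    have := hJS hv
    simp only [hS, hN', mem_filter, mem_univ, true_and] at this
    omega
end

section
/- Let d ≥ 1, let G be a d-degenerate finite simple graph on n vertices, and let H be a finite simple graph with the property that for every set Y of at most d vertices of H, the joint neighborhood N(Y) = ⋂_{y∈Y} N_H(y) (interpreted as all of V(H) when Y is empty) satisfies |N(Y)| ≥ n − |Y|. Then there exists a subgraph of H isomorphic to G; equivalently, there is an injection f : V(G) → V(H) such that f(x) and f(y) are adjacent in H whenever x and y are adjacent in G. -/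
/-!
Embed the vertices of `G` greedily, from the last vertex of a degeneracy order to the first.
When a vertex `v` is placed, at most `d` of its neighbours are already embedded; call their
image `Y`. The common neighbourhood of `Y` has at least `n - |Y|` vertices, and it meets the
set `S` of images used so far only outside `Y` (there are no loops), hence in at most
`|S| - |Y| < n - |Y|` vertices. So some common neighbour of `Y` is still free for `v`.
-/

open Finset

namespace SimpleGraph

variable {V W : Type*}

def jointNeighborFinset [Fintype W] (H : SimpleGraph W) [DecidableRel H.Adj] (Y : Finset W) :
    Finset W :=
  univ.filter fun w => ∀ y ∈ Y, H.Adj y w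

@[simp]
theorem mem_jointNeighborFinset [Fintype W] {H : SimpleGraph W} [DecidableRel H.Adj]
    {Y : Finset W} {w : W} : w ∈ H.jointNeighborFinset Y ↔ ∀ y ∈ Y, H.Adj y w := by
  simp [jointNeighborFinset]

def IsEmbeddingOn (G : SimpleGraph V) (H : SimpleGraph W) (f : V → W) (s : Set V) : Prop :=
  Set.InjOn f s ∧ ∀ x ∈ s, ∀ y ∈ s, G.Adj x y → H.Adj (f x) (f y)

theorem isEmbeddingOn_empty (G : SimpleGraph V) (H : SimpleGraph W) (f : V → W) :
    G.IsEmbeddingOn H f ∅ :=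
  ⟨Set.injOn_empty f, by simp⟩

theorem IsEmbeddingOn.update [DecidableEq V] {G : SimpleGraph V} {H : SimpleGraph W}
    {f : V → W} {s : Set V} {a : V} {w : W} (hf : G.IsEmbeddingOn H f s) (ha : a ∉ s)
    (hw : w ∉ f '' s) (hadj : ∀ x ∈ s, G.Adj a x → H.Adj (f x) w) :
    G.IsEmbeddingOn H (Function.update f a w) (insert a s) := by
  have heq : Set.EqOn (Function.update f a w) f s := fun x hx =>
    Function.update_of_ne (ne_of_mem_of_not_mem hx ha) _ _
  refine ⟨?_, ?_⟩
  · rw [Set.injOn_insert ha, heq.image_eq, Function.update_self]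
    exact ⟨hf.1.congr heq.symm, hw⟩
  · rintro x (rfl | hx) y (rfl | hy) hxy
    · exact absurd hxy (G.irrefl)
    · rw [Function.update_self, heq hy]
      exact (hadj y hy hxy).symm
    · rw [Function.update_self, heq hx]
      exact hadj x hx hxy.symm
    · rw [heq hx, heq hy]
      exact hf.2 x hx y hy hxy

theorem exists_notMem_forall_adj_of_card_lt [Fintype W] [DecidableEq W] (H : SimpleGraph W)
    [DecidableRel H.Adj] {Y S : Finset W} {n : ℕ} (hYS : Y ⊆ S) (hS : #S < n)
    (hY : n - #Y ≤ #(H.jointNeighborFinset Y)) : ∃ w ∉ S, ∀ y ∈ Y, H.Adj y w := by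
  set N := H.jointNeighborFinset Y
  have hNS : N ∩ S ⊆ S \ Y := fun w hw => mem_sdiff.2
    ⟨(mem_inter.1 hw).2, fun hwY => H.irrefl (mem_jointNeighborFinset.1 (mem_inter.1 hw).1 w hwY)⟩
  have hfree : 0 < #(N \ S) := by
    have := card_sdiff_add_card_inter N S
    have := card_le_card hNS
    have := card_sdiff_of_subset hYS
    have := card_le_card hYS
    omega
  obtain ⟨w, hw⟩ := card_pos.1 hfree
  exact ⟨w, (mem_sdiff.1 hw).2, mem_jointNeighborFinset.1 (mem_sdiff.1 hw).1⟩

theorem exists_isEmbeddingOn_of_degenerate [Fintype V] [DecidableEq V] [Fintype W]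
    [DecidableEq W] [Nonempty W] {α : Type*} [LinearOrder α] (G : SimpleGraph V)
    [DecidableRel G.Adj] (H : SimpleGraph W) [DecidableRel H.Adj] {d : ℕ} (ord : V → α)
    (hord : Function.Injective ord)
    (hdeg : ∀ v, #(univ.filter fun u => ord v < ord u ∧ G.Adj v u) ≤ d)
    (hH : ∀ Y : Finset W, #Y ≤ d → Fintype.card V - #Y ≤ #(H.jointNeighborFinset Y))
    (s : Finset V) : ∃ f : V → W, G.IsEmbeddingOn H f s := by
  induction s using Finset.induction_on_min_value ord with
  | empty => exact ⟨fun _ => Classical.arbitrary W, by simpa using isEmbeddingOn_empty G H _⟩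
  | insert a s has hmin ih =>
    obtain ⟨f, hf⟩ := ih
    set Y := (s.filter (G.Adj a)).image f
    have hYd : #Y ≤ d := by
      refine card_image_le.trans ((card_le_card fun x hx => ?_).trans (hdeg a))
      obtain ⟨hxs, hax⟩ := mem_filter.1 hx
      refine mem_filter.2 ⟨mem_univ x, lt_of_le_of_ne (hmin x hxs) fun h => ?_, hax⟩
      exact has (hord h ▸ hxs)
    have hS : #(s.image f) < Fintype.card V :=
      card_image_le.trans_lt (card_lt_univ_of_notMem has)
    obtain ⟨w, hwS, hwY⟩ := H.exists_notMem_forall_adj_of_card_lt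
      (image_subset_image (filter_subset _ s)) hS (hH Y hYd)
    refine ⟨Function.update f a w, ?_⟩
    rw [coe_insert]
    refine hf.update (mod_cast has) (by rwa [← coe_image, mem_coe]) fun x hx hax => ?_
    exact hwY _ (mem_image_of_mem f (mem_filter.2 ⟨hx, hax⟩))

end SimpleGraph

open SimpleGraph

theorem IsDegenerate.exists_injective {V : Type*} [Fintype V] {G : SimpleGraph V}
    [DecidableRel G.Adj] {d : ℕ} (h : IsDegenerate G d) :
    ∃ ord : V → Fin (Fintype.card V), Function.Injective ord ∧
      ∀ v, #(univ.filter fun u => ord v < ord u ∧ G.Adj v u) ≤ d := by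
  obtain ⟨e, he⟩ := h
  refine ⟨e.symm, e.symm.injective, fun v => (he (e.symm v)).trans_eq' ?_⟩
  refine card_nbij' e e.symm ?_ ?_ ?_ ?_ <;> simp [Set.MapsTo, Set.LeftInvOn]

theorem stmt_2_general {V W : Type*} [Fintype V] [DecidableEq V] [Fintype W] [DecidableEq W]
    (G : SimpleGraph V) [DecidableRel G.Adj] (H : SimpleGraph W) [DecidableRel H.Adj]
    (d n : ℕ) (hdeg : IsDegenerate G d) (hn : Fintype.card V = n)
    (hH : ∀ Y : Finset W, Y.card ≤ d →
      n - Y.card ≤ (Finset.univ.filter fun w => ∀ y ∈ Y, H.Adj y w).card) :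
    ∃ f : V → W, Function.Injective f ∧ ∀ x y, G.Adj x y → H.Adj (f x) (f y) := by
  subst hn
  rcases isEmpty_or_nonempty V with hV | hV
  · exact ⟨isEmptyElim, fun x => isEmptyElim x, fun x => isEmptyElim x⟩
  have hW : Fintype.card V ≤ Fintype.card W := by
    simpa using (hH ∅ (by simp)).trans (card_le_univ _)
  have : Nonempty W := Fintype.card_pos_iff.1 (Fintype.card_pos.trans_le hW)
  obtain ⟨ord, hord, hdeg⟩ := hdeg.exists_injective
  obtain ⟨f, hinj, hadj⟩ := exists_isEmbeddingOn_of_degenerate G H ord hord hdeg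
    (fun Y hY => (hH Y hY).trans_eq (by unfold jointNeighborFinset; congr!)) univ
  exact ⟨f, by simpa using hinj, fun x y hxy => hadj x (by simp) y (by simp) hxy⟩

theorem stmt_2 {V W : Type*} [Fintype V] [DecidableEq V] [Fintype W] [DecidableEq W]
    (G : SimpleGraph V) [DecidableRel G.Adj] (H : SimpleGraph W) [DecidableRel H.Adj]
    (d n : ℕ) (hd : 1 ≤ d) (hdeg : IsDegenerate G d) (hn : Fintype.card V = n)
    (hH : ∀ Y : Finset W, Y.card ≤ d →
      n - Y.card ≤ (Finset.univ.filter fun w => ∀ y ∈ Y, H.Adj y w).card) :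
    ∃ f : V → W, Function.Injective f ∧ ∀ x y, G.Adj x y → H.Adj (f x) (f y) :=
  stmt_2_general G H d n hdeg hn hH
end

section
/- Let d ≥ 1 and let G be a d-degenerate finite simple graph on n vertices in which every vertex has degree at least 1. Then the number of vertices of G of degree at most 2d is at least n/(d+1); that is, (d+1)·|{v ∈ V(G) : deg_G(v) ≤ 2d}| ≥ n. -/
theorem stmt_4 {V : Type*} [Fintype V] [DecidableEq V]
    (G : SimpleGraph V) [DecidableRel G.Adj] (d n : ℕ) (hd : 1 ≤ d)
    (hdeg : IsDegenerate G d) (hn : Fintype.card V = n)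
    (hmin : ∀ v : V, 1 ≤ G.degree v) :
    n ≤ (d + 1) * (Finset.univ.filter fun v => G.degree v ≤ 2 * d).card := by
  classical
  obtain ⟨σ, hσ⟩ := hdeg
  let F : Fin (Fintype.card V) → Finset (Fin (Fintype.card V)) :=
    fun i => Finset.univ.filter fun j => i < j ∧ G.Adj (σ i) (σ j)
  let B : Fin (Fintype.card V) → Finset (Fin (Fintype.card V)) :=
    fun i => Finset.univ.filter fun j => j < i ∧ G.Adj (σ i) (σ j)
  have hFd : ∀ i, (F i).card ≤ d := fun i => hσ i
  have hdd : ∀ i, G.degree (σ i) = (F i).card + (B i).card := by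
    intro i
    have h1 : G.degree (σ i) = (Finset.univ.filter fun j => G.Adj (σ i) (σ j)).card := by
      rw [SimpleGraph.degree]
      refine (Finset.card_equiv σ ?_).symm
      intro j
      simp [SimpleGraph.mem_neighborFinset]
    have h2 : (Finset.univ.filter fun j => G.Adj (σ i) (σ j)) = F i ∪ B i := by
      ext j
      simp only [F, B, Finset.mem_filter, Finset.mem_union, Finset.mem_univ, true_and]
      constructor
      · intro h
        rcases lt_trichotomy i j with h' | h' | h'
        · exact Or.inl ⟨h', h⟩
        · exact absurd (h' ▸ h) (G.irrefl)
        · exact Or.inr ⟨h', h⟩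
      · rintro (⟨_, h⟩ | ⟨_, h⟩) <;> exact h
    have hdisj : Disjoint (F i) (B i) := by
      rw [Finset.disjoint_left]
      intro j hj1 hj2
      simp only [F, B, Finset.mem_filter, Finset.mem_univ, true_and] at hj1 hj2
      exact absurd (lt_trans hj1.1 hj2.1) (lt_irrefl i)
    rw [h1, h2, Finset.card_union_of_disjoint hdisj]
  set T : Finset (Fin (Fintype.card V)) :=
    Finset.univ.filter fun i => ¬ G.degree (σ i) ≤ 2 * d with hT
  have hback : ∀ i ∈ T, d + 1 ≤ (B i).card := by
    intro i hi
    simp only [hT, Finset.mem_filter, Finset.mem_univ, true_and, not_le] at hi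
    have h1 := hdd i
    have h2 := hFd i
    omega
  have hcount : ∑ i ∈ T, (B i).card ≤ Fintype.card V * d := by
    have step1 : ∑ i ∈ T, (B i).card
        = ∑ j : Fin (Fintype.card V),
            (T.filter fun i => j < i ∧ G.Adj (σ i) (σ j)).card := by
      simp only [B, Finset.card_filter]
      rw [Finset.sum_comm']
      simp
    calc ∑ i ∈ T, (B i).card
        = ∑ j : Fin (Fintype.card V),
            (T.filter fun i => j < i ∧ G.Adj (σ i) (σ j)).card := step1
      _ ≤ ∑ _j : Fin (Fintype.card V), d := by
          refine Finset.sum_le_sum fun j _ => ?_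
          refine le_trans (Finset.card_le_card ?_) (hFd j)
          intro i hi
          simp only [Finset.mem_filter] at hi
          simp only [F, Finset.mem_filter, Finset.mem_univ, true_and]
          exact ⟨hi.2.1, (hi.2.2).symm⟩
      _ = Fintype.card V * d := by simp [mul_comm]
  have hTlow : (d + 1) * T.card ≤ ∑ i ∈ T, (B i).card := by
    calc (d + 1) * T.card = ∑ _i ∈ T, (d + 1) := by simp [mul_comm]
      _ ≤ ∑ i ∈ T, (B i).card := Finset.sum_le_sum hback
  have hkey : (d + 1) * T.card ≤ Fintype.card V * d := le_trans hTlow hcount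
  set S : Finset (Fin (Fintype.card V)) :=
    Finset.univ.filter fun i => G.degree (σ i) ≤ 2 * d with hS
  have hsplit : S.card + T.card = Fintype.card V := by
    rw [hS, hT, Finset.card_filter_add_card_filter_not, Finset.card_univ, Fintype.card_fin]
  have hScard : S.card = (Finset.univ.filter fun v => G.degree v ≤ 2 * d).card := by
    refine Finset.card_equiv σ ?_
    intro i
    simp [hS]
  rw [← hScard]
  nlinarith [hkey, hsplit, hn]
end

section
/- Let p be a prime, let s be a natural number, and for each i ∈ {1, …, s} let a_i, b_i ∈ ZMod p. If the number of indices i with a_i ≠ b_i is at least p, then for every g ∈ ZMod p there exists a choice x_i ∈ {a_i, b_i} for each i such that Σ_{i=1}^{s} x_i = g. -/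
open Finset Pointwise

private lemma stmt6_card {p : ℕ} (hp : p.Prime) {s : ℕ} (a b : Fin s → ZMod p)
    (u : Finset (Fin s)) :
    min p ((u.filter fun i => a i ≠ b i).card + 1) ≤
      (∑ i ∈ u, ({a i, b i} : Finset (ZMod p))).card := by
  induction u using Finset.cons_induction with
  | empty => simp
  | cons i u hi ih =>
    rw [Finset.sum_cons, Finset.filter_cons]
    have hT : (∑ i ∈ u, ({a i, b i} : Finset (ZMod p))).Nonempty := by
      apply Finset.card_pos.mp
      have h2 := hp.two_le
      omega
    have hS : ({a i, b i} : Finset (ZMod p)).Nonempty := ⟨a i, by simp⟩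
    have hcd := ZMod.cauchy_davenport hp hS hT
    by_cases hab : a i = b i
    · have h1 : ({a i, b i} : Finset (ZMod p)).card = 1 := by
        simp [hab]
      have h2 := hp.two_le
      simp only [hab, if_neg (by simp : ¬ (b i : ZMod p) ≠ b i)] at *
      omega
    · have h2 : ({a i, b i} : Finset (ZMod p)).card = 2 := by
        rw [Finset.card_insert_of_notMem (by simpa using hab)]; simp
      rw [if_pos hab, Finset.card_cons]
      omega

private lemma stmt6_mem {p : ℕ} {s : ℕ} (a b : Fin s → ZMod p)
    (u : Finset (Fin s)) (g : ZMod p)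
    (hg : g ∈ ∑ i ∈ u, ({a i, b i} : Finset (ZMod p))) :
    ∃ x : Fin s → ZMod p, (∀ i, x i = a i ∨ x i = b i) ∧ ∑ i ∈ u, x i = g := by
  induction u using Finset.cons_induction generalizing g with
  | empty =>
    refine ⟨a, fun i => Or.inl rfl, ?_⟩
    simpa using (Finset.mem_zero.mp (by simpa using hg)).symm
  | cons i u hi ih =>
    rw [Finset.sum_cons, Finset.mem_add] at hg
    obtain ⟨y, hy, z, hz, hyz⟩ := hg
    obtain ⟨x, hx, hsum⟩ := ih z hz
    refine ⟨Function.update x i y, fun j => ?_, ?_⟩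
    · by_cases hj : j = i
      · subst hj
        simp only [Function.update_self]
        simpa using hy
      · simp [Function.update_of_ne hj, hx j]
    · have hrest : ∑ j ∈ u, Function.update x i y j = ∑ j ∈ u, x j :=
        Finset.sum_congr rfl fun j hj =>
          Function.update_of_ne (fun e : j = i => hi (by rwa [e] at hj)) y x
      rw [Finset.sum_cons, Function.update_self, hrest, hsum, hyz]

theorem stmt_6 (p : ℕ) (hp : p.Prime) (s : ℕ) (a b : Fin s → ZMod p)
    (h : p ≤ (Finset.univ.filter fun i => a i ≠ b i).card) :
    ∀ g : ZMod p, ∃ x : Fin s → ZMod p,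
      (∀ i, x i = a i ∨ x i = b i) ∧ ∑ i, x i = g := by
  intro g
  haveI : Fact p.Prime := ⟨hp⟩
  have hcard := stmt6_card hp a b Finset.univ
  have hmin : min p ((Finset.univ.filter fun i => a i ≠ b i).card + 1) = p := by omega
  rw [hmin] at hcard
  have huniv : (∑ i : Fin s, ({a i, b i} : Finset (ZMod p))) = Finset.univ := by
    apply Finset.eq_univ_of_card
    have hle := Finset.card_le_univ (∑ i : Fin s, ({a i, b i} : Finset (ZMod p)))
    rw [Fintype.card_eq_nat_card, Nat.card_zmod] at *
    omega
  exact stmt6_mem a b Finset.univ g (huniv ▸ Finset.mem_univ g)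
end

section
/- Let p be a prime, let R be a finite set, and let c assign to each unordered pair of distinct elements of R a value in ZMod p. Let G be a finite simple graph and let J = {v_1, …, v_s} be an independent set of vertices of G. Write N_i for the neighborhood of v_i in G. Suppose f : V(G)∖J → R and h, h' : J → R are injections such that: (1) f(V(G)∖J) is disjoint from h(J) ∪ h'(J); (2) h(v) ≠ h'(v') for all v ≠ v' in J; and (3) the number of indices i with Σ_{u∈N_i} c({h(v_i), f(u)}) ≠ Σ_{u∈N_i} c({h'(v_i), f(u)}) is at least p. Then there exists an injection F : V(G) → R extending f with F(v_i) ∈ {h(v_i), h'(v_i)} for every i, such that Σ_{{x,y} ∈ E(G)} c({F(x), F(y)}) = 0; in particular F is a zero-sum copy of G. -/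
/-!
The edges of `G` split into those avoiding `J` and, `J` being independent, the pairwise disjoint
stars at the `vᵢ`. Choosing `F(vᵢ) ∈ {h(vᵢ), h'(vᵢ)}` only affects the star sum at `vᵢ`, which
becomes one of two values `aᵢ, bᵢ`. By Cauchy–Davenport, `p` indices with `aᵢ ≠ bᵢ` make the
sumset `∑ᵢ {aᵢ, bᵢ}` all of `ZMod p`, so some choice cancels the sum over the edges avoiding `J`.
-/

open Finset Function

open scoped Pointwise

namespace ZMod

variable {ι : Type*} {p : ℕ}

theorem min_le_card_sum_pair (hp : p.Prime) (a b : ι → ZMod p) (T : Finset ι) :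
    min p (#{i ∈ T | a i ≠ b i} + 1) ≤ #(∑ i ∈ T, ({a i, b i} : Finset (ZMod p))) := by
  induction T using Finset.cons_induction with
  | empty => simp
  | cons j T hj ih =>
    rw [sum_cons, filter_cons]
    have hne : (∑ i ∈ T, ({a i, b i} : Finset (ZMod p))).Nonempty :=
      card_pos.1 (lt_of_lt_of_le (lt_min hp.pos (Nat.succ_pos _)) ih)
    by_cases hab : a j = b j
    · simpa [hab, card_singleton_add] using ih
    · have hcd := cauchy_davenport hp (s := {a j, b j}) (insert_nonempty _ _) hne
      rw [card_pair hab] at hcd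
      rw [if_pos hab, card_cons]
      omega

theorem exists_sum_eq_of_le_card_ne [Fintype ι] (hp : p.Prime) (a b : ι → ZMod p)
    (hab : p ≤ #{i | a i ≠ b i}) (z : ZMod p) :
    ∃ g : ι → ZMod p, (∀ i, g i = a i ∨ g i = b i) ∧ ∑ i, g i = z := by
  have : NeZero p := ⟨hp.ne_zero⟩
  have huniv : ∑ i, ({a i, b i} : Finset (ZMod p)) = univ := by
    apply eq_univ_of_card
    have := min_le_card_sum_pair hp a b univ
    have := card_le_univ (∑ i, ({a i, b i} : Finset (ZMod p)))
    rw [ZMod.card] at *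
    omega
  have hz : z ∈ ((∑ i, ({a i, b i} : Finset (ZMod p)) : Finset (ZMod p)) : Set (ZMod p)) := by
    simp [huniv]
  rw [coe_sum, Set.mem_finsetSum] at hz
  obtain ⟨g, hg, hsum⟩ := hz
  exact ⟨g, fun i => by simpa using hg (mem_univ i), hsum⟩

end ZMod

namespace SimpleGraph

variable {V M : Type*} [Fintype V] [DecidableEq V] [AddCommMonoid M]
  (G : SimpleGraph V) [DecidableRel G.Adj]

theorem sum_incidenceFinset_eq_sum_neighborFinset (w : Sym2 V → M) (x : V) :
    ∑ e ∈ G.incidenceFinset x, w e = ∑ u ∈ G.neighborFinset x, w s(x, u) := by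
  refine (sum_bij (fun u _ => s(x, u)) (fun u hu => ?_) (fun u _ u' _ => Sym2.congr_right.1)
    (fun e he => ?_) (fun _ _ => rfl)).symm
  · simpa [mem_incidence_iff_neighbor] using hu
  · induction e using Sym2.ind with
    | h y z =>
      obtain ⟨hyz, hx⟩ := (G.mem_incidenceFinset (v := x) _).1 he
      rcases Sym2.mem_iff.1 hx with rfl | rfl
      · exact ⟨z, by simpa using hyz, rfl⟩
      · exact ⟨y, by simpa [adj_comm] using hyz, Sym2.eq_swap⟩

theorem sum_edgeFinset_eq_sum_filter_add_sum_neighborFinset {ι : Type*} [Fintype ι]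
    (v : ι → V) [DecidablePred fun e : Sym2 V => ∀ i, v i ∉ e] (hv : Injective v)
    (hindep : ∀ i j, ¬ G.Adj (v i) (v j)) (w : Sym2 V → M) :
    ∑ e ∈ G.edgeFinset, w e =
      ∑ e ∈ G.edgeFinset with ∀ i, v i ∉ e, w e +
        ∑ i, ∑ u ∈ G.neighborFinset (v i), w s(v i, u) := by
  have hmeet :
      {e ∈ G.edgeFinset | ¬ ∀ i, v i ∉ e} = univ.biUnion fun i => G.incidenceFinset (v i) := by
    ext e
    simp [incidenceFinset_eq_filter]
  have hdisj : ((univ : Finset ι) : Set ι).PairwiseDisjoint fun i => G.incidenceFinset (v i) := by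
    intro i _ j _ hij
    rw [onFun, ← disjoint_coe, coe_incidenceFinset, coe_incidenceFinset,
      Set.disjoint_iff_inter_eq_empty]
    exact G.incidenceSet_inter_incidenceSet_of_not_adj (hindep i j) (hv.ne hij)
  rw [← sum_filter_add_sum_filter_not G.edgeFinset (fun e => ∀ i, v i ∉ e), hmeet,
    sum_biUnion hdisj]
  simp only [sum_incidenceFinset_eq_sum_neighborFinset]

theorem sum_edgeFinset_map_extend {ι R : Type*} [Fintype ι] (v : ι → V)
    [DecidablePred fun e : Sym2 V => ∀ i, v i ∉ e] (hv : Injective v)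
    (hindep : ∀ i j, ¬ G.Adj (v i) (v j)) (E : ι → R) (f : V → R) (w : Sym2 R → M) :
    ∑ e ∈ G.edgeFinset, w (e.map (extend v E f)) =
      ∑ e ∈ G.edgeFinset with ∀ i, v i ∉ e, w (e.map f) +
        ∑ i, ∑ u ∈ G.neighborFinset (v i), w s(E i, f u) := by
  rw [G.sum_edgeFinset_eq_sum_filter_add_sum_neighborFinset v hv hindep]
  congr 1
  · refine sum_congr rfl fun e he => congrArg w (Sym2.map_congr fun x hx => ?_)
    refine extend_apply' _ _ _ ?_
    rintro ⟨i, rfl⟩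
    exact (mem_filter.1 he).2 i hx
  · refine sum_congr rfl fun i _ => sum_congr rfl fun u hu => ?_
    have hu : ¬∃ j, v j = u := by
      rintro ⟨j, rfl⟩
      exact hindep i j ((G.mem_neighborFinset _ _).1 hu)
    rw [Sym2.map_mk, hv.extend_apply, extend_apply' _ _ _ hu]

end SimpleGraph

theorem Function.injective_extend_of_injOn {α β γ : Type*} {v : α → β} {g : α → γ} {f : β → γ}
    (hv : Injective v) (hg : Injective g) (hf : Set.InjOn f (Set.range v)ᶜ)
    (hfg : ∀ b ∉ Set.range v, f b ∉ Set.range g) : Injective (extend v g f) := by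
  intro x y hxy
  by_cases hx : x ∈ Set.range v <;> by_cases hy : y ∈ Set.range v
  · obtain ⟨i, rfl⟩ := hx
    obtain ⟨j, rfl⟩ := hy
    rw [hv.extend_apply, hv.extend_apply] at hxy
    rw [hg hxy]
  · obtain ⟨i, rfl⟩ := hx
    rw [hv.extend_apply, extend_apply' _ _ _ hy] at hxy
    exact absurd ⟨i, hxy⟩ (hfg y hy)
  · obtain ⟨j, rfl⟩ := hy
    rw [hv.extend_apply, extend_apply' _ _ _ hx] at hxy
    exact absurd ⟨j, hxy.symm⟩ (hfg x hx)
  · rw [extend_apply' _ _ _ hx, extend_apply' _ _ _ hy] at hxy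
    exact hf hx hy hxy

theorem Function.injective_extend_piecewise {ι β γ : Type*} {v : ι → β} {h h' : ι → γ}
    {f : β → γ} (S : Set ι) [DecidablePred (· ∈ S)] (hv : Injective v) (hh : Injective h)
    (hh' : Injective h') (hhh' : ∀ i j, i ≠ j → h i ≠ h' j) (hf : Set.InjOn f (Set.range v)ᶜ)
    (hfh : ∀ b ∉ Set.range v, ∀ i, f b ≠ h i ∧ f b ≠ h' i) :
    Injective (extend v (S.piecewise h h') f) := by
  refine injective_extend_of_injOn hv ?_ hf ?_
  · rw [Set.injective_piecewise_iff]
    exact ⟨hh.injOn, hh'.injOn, fun i hi j hj => hhh' i j (by rintro rfl; exact hj hi)⟩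
  · rintro b hb ⟨i, hi⟩
    by_cases hiS : i ∈ S
    · exact (hfh b hb i).1 (by simpa [hiS] using hi.symm)
    · exact (hfh b hb i).2 (by simpa [hiS] using hi.symm)

theorem stmt_7_general {V R : Type*} [Fintype V] [DecidableEq V]
    (p : ℕ) (hp : p.Prime) (c : Sym2 R → ZMod p)
    (G : SimpleGraph V) [DecidableRel G.Adj]
    (s : ℕ) (v : Fin s → V) (hv : Function.Injective v)
    (hindep : ∀ i j, ¬ G.Adj (v i) (v j))
    (f : V → R) (h h' : Fin s → R)
    (hf : Set.InjOn f {x | ∀ i, x ≠ v i})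
    (hh : Function.Injective h) (hh' : Function.Injective h')
    (h1 : ∀ x, (∀ i, x ≠ v i) → ∀ i, f x ≠ h i ∧ f x ≠ h' i)
    (h2 : ∀ i j, i ≠ j → h i ≠ h' j)
    (h3 : p ≤ (Finset.univ.filter fun i =>
        (∑ u ∈ G.neighborFinset (v i), c s(h i, f u)) ≠
        ∑ u ∈ G.neighborFinset (v i), c s(h' i, f u)).card) :
    ∃ F : V → R, Function.Injective F ∧
      (∀ x, (∀ i, x ≠ v i) → F x = f x) ∧
      (∀ i, F (v i) = h i ∨ F (v i) = h' i) ∧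
      ∑ e ∈ G.edgeFinset, c (Sym2.map F e) = 0 := by
  set C := ∑ e ∈ G.edgeFinset with ∀ i, v i ∉ e, c (Sym2.map f e)
  obtain ⟨g, hg, hgsum⟩ := ZMod.exists_sum_eq_of_le_card_ne hp _ _ h3 (-C)
  set S := {i | g i = ∑ u ∈ G.neighborFinset (v i), c s(h i, f u)}
  have hrange : ∀ x, (∀ i, x ≠ v i) ↔ x ∉ Set.range v := by simp [eq_comm]
  have hS : ∀ i, ∑ u ∈ G.neighborFinset (v i), c s(S.piecewise h h' i, f u) = g i := by
    intro i
    by_cases hi : i ∈ S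
    · rw [S.piecewise_eq_of_mem _ _ hi]; exact hi.symm
    · rw [S.piecewise_eq_of_notMem _ _ hi]; exact ((hg i).resolve_left hi).symm
  refine ⟨extend v (S.piecewise h h') f,
    injective_extend_piecewise S hv hh hh' h2 ?_ fun x hx => h1 x ((hrange x).2 hx),
    fun x hx => extend_apply' _ _ _ ((hrange x).1 hx), fun i => ?_, ?_⟩
  · simpa [Set.compl_def, hrange] using hf
  · rw [hv.extend_apply]
    by_cases hi : i ∈ S <;> simp [hi]
  · rw [G.sum_edgeFinset_map_extend v hv hindep, sum_congr rfl fun i _ => hS i, hgsum,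
      add_neg_cancel]

theorem stmt_7 {V R : Type*} [Fintype V] [DecidableEq V] [Fintype R] [DecidableEq R]
    (p : ℕ) (hp : p.Prime) (c : Sym2 R → ZMod p)
    (G : SimpleGraph V) [DecidableRel G.Adj]
    (s : ℕ) (v : Fin s → V) (hv : Function.Injective v)
    (hindep : ∀ i j, ¬ G.Adj (v i) (v j))
    (f : V → R) (h h' : Fin s → R)
    (hf : Set.InjOn f {x | ∀ i, x ≠ v i})
    (hh : Function.Injective h) (hh' : Function.Injective h')
    (h1 : ∀ x, (∀ i, x ≠ v i) → ∀ i, f x ≠ h i ∧ f x ≠ h' i)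
    (h2 : ∀ i j, i ≠ j → h i ≠ h' j)
    (h3 : p ≤ (Finset.univ.filter fun i =>
        (∑ u ∈ G.neighborFinset (v i), c s(h i, f u)) ≠
        ∑ u ∈ G.neighborFinset (v i), c s(h' i, f u)).card) :
    ∃ F : V → R, Function.Injective F ∧
      (∀ x, (∀ i, x ≠ v i) → F x = f x) ∧
      (∀ i, F (v i) = h i ∨ F (v i) = h' i) ∧
      ∑ e ∈ G.edgeFinset, c (Sym2.map F e) = 0 :=
  stmt_7_general p hp c G s v hv hindep f h h' hf hh hh' h1 h2 h3
end

section
/- Let R be a finite set, let c assign to each unordered pair of distinct elements of R a value in ZMod p, let C : R → ZMod p be a vertex coloring, and let k' ≥ 0 be an integer such that every x ∈ R satisfies |{w ∈ R∖{x} : c({x,w}) ≠ C(x)}| ≤ k'. Suppose R is partitioned as R = D ⊔ D' with |D| ≥ |D'| and C(x) ≠ C(x') for every x ∈ D and x' ∈ D'. Then |D'| ≤ 2k'. -/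
/-!
Count the pairs `(x, x')` in `D × D'`. Since `C x ≠ C x'`, the colour of the edge `xx'` differs
from at least one of the two majority colours, so every pair is charged to an endpoint that sees
it as a deviating edge. Each vertex is charged at most `k'` times, hence
`|D| |D'| ≤ (|D| + |D'|) k' ≤ 2 |D| k'`, and dividing by `|D|` gives the bound.
-/

open Finset

namespace Finset

variable {α : Type*}

theorem card_mul_card_le_sum_card_filter_add_sum_card_filter (s t : Finset α)
    (r : α → α → Prop) [DecidableRel r] (h : ∀ x ∈ s, ∀ y ∈ t, r x y ∨ r y x) :
    #s * #t ≤ ∑ x ∈ s, #{y ∈ t | r x y} + ∑ y ∈ t, #{x ∈ s | r y x} := by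
  classical
  have hcover : ∀ x ∈ s, #t ≤ #{y ∈ t | r x y} + #{y ∈ t | r y x} := fun x hx =>
    calc #t ≤ #({y ∈ t | r x y} ∪ {y ∈ t | r y x}) := by
          rw [← filter_or]
          exact card_le_card fun y hy => mem_filter.2 ⟨hy, h x hx y hy⟩
      _ ≤ _ := card_union_le _ _
  calc #s * #t = ∑ x ∈ s, #t := by rw [sum_const, smul_eq_mul]
    _ ≤ ∑ x ∈ s, (#{y ∈ t | r x y} + #{y ∈ t | r y x}) := sum_le_sum hcover
    _ = ∑ x ∈ s, #{y ∈ t | r x y} + ∑ y ∈ t, #{x ∈ s | r y x} := by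
      rw [sum_add_distrib]
      exact congrArg _ (sum_card_bipartiteAbove_eq_sum_card_bipartiteBelow (fun x y => r y x))

end Finset

theorem card_filter_colour_ne_le_of_notMem {R : Type*} [Fintype R] [DecidableEq R] {κ : Type*} [DecidableEq κ]
    {c : Sym2 R → κ} {C : R → κ} {k' : ℕ}
    (hreg : ∀ x : R, #{w | w ≠ x ∧ c s(x, w) ≠ C x} ≤ k') {t : Finset R} {x : R} (hx : x ∉ t) :
    #{w ∈ t | c s(x, w) ≠ C x} ≤ k' :=
  (card_le_card fun w hw => by
    obtain ⟨hwt, hcw⟩ := mem_filter.1 hw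
    exact mem_filter.2 ⟨mem_univ w, fun hwx => hx (hwx ▸ hwt), hcw⟩).trans (hreg x)

theorem stmt_11_general {R : Type*} [Fintype R] [DecidableEq R]
    (p : ℕ) (c : Sym2 R → ZMod p) (C : R → ZMod p) (k' : ℕ)
    (hreg : ∀ x : R,
      (Finset.univ.filter fun w => w ≠ x ∧ c s(x, w) ≠ C x).card ≤ k')
    (D D' : Finset R) (hdisj : Disjoint D D')
    (hcard : D'.card ≤ D.card)
    (hdiff : ∀ x ∈ D, ∀ x' ∈ D', C x ≠ C x') :
    D'.card ≤ 2 * k' := by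
  have hcharge : ∀ x ∈ D, ∀ x' ∈ D', c s(x, x') ≠ C x ∨ c s(x', x) ≠ C x' := by
    intro x hx x' hx'
    rw [Sym2.eq_swap, ← not_and_or]
    rintro ⟨hcx, hcx'⟩
    exact hdiff x hx x' hx' (hcx.symm.trans hcx')
  have hcount : #D * #D' ≤ #D * (2 * k') :=
    calc #D * #D' ≤ ∑ x ∈ D, #{x' ∈ D' | c s(x, x') ≠ C x}
          + ∑ x' ∈ D', #{x ∈ D | c s(x', x) ≠ C x'} :=
          card_mul_card_le_sum_card_filter_add_sum_card_filter D D' _ hcharge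
      _ ≤ ∑ _x ∈ D, k' + ∑ _x' ∈ D', k' := by
          gcongr with x hx x' hx'
          · exact card_filter_colour_ne_le_of_notMem hreg (disjoint_left.1 hdisj hx)
          · exact card_filter_colour_ne_le_of_notMem hreg (disjoint_right.1 hdisj hx')
      _ ≤ #D * (2 * k') := by
          simp only [sum_const, smul_eq_mul]
          nlinarith
  rcases (#D).eq_zero_or_pos with hD | hD
  · omega
  · exact Nat.le_of_mul_le_mul_left hcount hD

theorem stmt_11 {R : Type*} [Fintype R] [DecidableEq R]
    (p : ℕ) (c : Sym2 R → ZMod p) (C : R → ZMod p) (k' : ℕ)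
    (hreg : ∀ x : R,
      (Finset.univ.filter fun w => w ≠ x ∧ c s(x, w) ≠ C x).card ≤ k')
    (D D' : Finset R) (hunion : D ∪ D' = Finset.univ) (hdisj : Disjoint D D')
    (hcard : D'.card ≤ D.card)
    (hdiff : ∀ x ∈ D, ∀ x' ∈ D', C x ≠ C x') :
    D'.card ≤ 2 * k' :=
  stmt_11_general p c C k' hreg D D' hdisj hcard hdiff
end

section
/- Let p be a prime, let k ≥ 1 and let K be an integer with 1 ≤ K ≤ ⌈k/2⌉. Let R be a finite set with |R| ≥ 4k + 2, let c assign to each unordered pair of distinct elements of R a value in ZMod p, and let C_1, …, C_k : R → ZMod p be vertex colorings. Suppose that for every u ∈ R and every family of elements w_1, w_1', …, w_k, w_k' of R∖{u} (with w_i = w_i' allowed) satisfying {u, w_i, w_i'} ∩ {w_j, w_j'} = ∅ for all i ≠ j, the number of indices i with c({u, w_i}) + C_i(w_i) ≠ c({u, w_i'}) + C_i(w_i') is strictly less than K. Then for every u ∈ R there exist a subset L ⊆ R with u ∈ L and |L| ≤ K, and a subset I ⊆ {1, …, k} with |I| > k/2, such that for every i ∈ I the function w ↦ c({u, w}) + C_i(w)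 is constant on R ∖ L. -/
open Finset

open Finset

lemma sdr_lemma {α β : Type*} [DecidableEq α] [DecidableEq β] [Nonempty β] (A : Finset α) :
    ∀ (F : Finset β) (B : α → Finset β), (∀ i ∈ A, F.card + A.card ≤ (B i).card) →
    ∃ g : α → β, (∀ i ∈ A, g i ∈ B i ∧ g i ∉ F) ∧
      ∀ i ∈ A, ∀ j ∈ A, i ≠ j → g i ≠ g j := by
  classical
  induction A using Finset.induction_on with
  | empty =>
      intro F B _
      exact ⟨fun _ => Classical.arbitrary β, by simp, by simp⟩
  | @insert i A hiA ih =>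
      intro F B hcond
      have hi := hcond i (mem_insert_self i A)
      have hne : (B i \ F).Nonempty := by
        rw [← Finset.card_pos]
        have h1 : (B i).card - F.card ≤ (B i \ F).card := le_card_sdiff F (B i)
        have h2 := Finset.card_insert_of_notMem hiA
        omega
      obtain ⟨a, ha⟩ := hne
      obtain ⟨haB, haF⟩ := Finset.mem_sdiff.1 ha
      obtain ⟨g, hg1, hg2⟩ := ih (insert a F) B (by
        intro j hj
        have := hcond j (mem_insert_of_mem hj)
        have h2 := Finset.card_insert_of_notMem hiA
        have h3 := Finset.card_insert_le a F
        omega)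
      refine ⟨Function.update g i a, ?_, ?_⟩
      · intro j hj
        rcases Finset.mem_insert.1 hj with rfl | hj
        · simp [haB, haF]
        · have hji : j ≠ i := fun h => hiA (h ▸ hj)
          have := hg1 j hj
          simp only [Function.update_of_ne hji]
          exact ⟨this.1, fun h => this.2 (mem_insert_of_mem h)⟩
      · intro j hj l hl hjl
        by_cases h1 : j = i <;> by_cases h2 : l = i
        · exact absurd (h1.trans h2.symm) hjl
        · subst h1
          have hl' : l ∈ A := (Finset.mem_insert.1 hl).resolve_left h2
          simp only [Function.update_self, Function.update_of_ne h2]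
          intro h
          exact (hg1 l hl').2 (h ▸ mem_insert_self a F)
        · subst h2
          have hj' : j ∈ A := (Finset.mem_insert.1 hj).resolve_left h1
          simp only [Function.update_self, Function.update_of_ne h1]
          intro h
          exact (hg1 j hj').2 (h ▸ mem_insert_self a F)
        · have hj' : j ∈ A := (Finset.mem_insert.1 hj).resolve_left h1
          have hl' : l ∈ A := (Finset.mem_insert.1 hl).resolve_left h2
          simp only [Function.update_of_ne h1, Function.update_of_ne h2]
          exact hg2 j hj' l hl' hjl


theorem stmt_12 {R : Type*} [Fintype R] [DecidableEq R]
    (p : ℕ) (hp : p.Prime) (k K : ℕ) (hk : 1 ≤ k)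
    (hK1 : 1 ≤ K) (hK2 : K ≤ (k + 1) / 2)
    (hR : 4 * k + 2 ≤ Fintype.card R)
    (c : Sym2 R → ZMod p) (C : Fin k → R → ZMod p)
    (hyp : ∀ u : R, ∀ w w' : Fin k → R,
      (∀ i, w i ≠ u ∧ w' i ≠ u) →
      (∀ i j, i ≠ j → ({u, w i, w' i} : Set R) ∩ {w j, w' j} = ∅) →
      (Finset.univ.filter fun i : Fin k =>
        c s(u, w i) + C i (w i) ≠ c s(u, w' i) + C i (w' i)).card < K) :
    ∀ u : R, ∃ L : Finset R, u ∈ L ∧ L.card ≤ K ∧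
      ∃ I : Finset (Fin k), k < 2 * I.card ∧
        ∀ i ∈ I, ∀ w ∉ L, ∀ w' ∉ L,
          c s(u, w) + C i w = c s(u, w') + C i w' := by
  classical
  have hRne : Nonempty R := by
    rw [← Fintype.card_pos_iff]; omega
  intro u
  set S : Finset R := Finset.univ.erase u with hS
  have hmemS : ∀ w : R, w ∈ S ↔ w ≠ u := by
    intro w; simp [hS]
  have hScard : 4 * k + 1 ≤ S.card := by
    have := Finset.card_erase_of_mem (Finset.mem_univ u)
    rw [hS, this, Finset.card_univ]
    omega
  have h2K : 2 * K ≤ k + 1 := by omega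
  set f : Fin k → R → ZMod p := fun i w => c s(u, w) + C i w with hf
  have key : ∀ (T : Finset (Fin k)) (x y : Fin k → R),
      K ≤ T.card →
      (∀ i ∈ T, x i ∈ S ∧ y i ∈ S ∧ f i (x i) ≠ f i (y i)) →
      (∀ i ∈ T, ∀ j ∈ T, i ≠ j →
        x i ≠ x j ∧ x i ≠ y j ∧ y i ≠ x j ∧ y i ≠ y j) →
      False := by
    intro T x y hT hmem hdisj
    set F : Finset R := insert u (T.image x ∪ T.image y) with hF
    have hFcard : F.card ≤ 2 * k + 1 := by
      calc F.card ≤ (T.image x ∪ T.image y).card + 1 := Finset.card_insert_le _ _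
      _ ≤ ((T.image x).card + (T.image y).card) + 1 := by
          have := Finset.card_union_le (T.image x) (T.image y); omega
      _ ≤ 2 * k + 1 := by
          have h1 := Finset.card_image_le (s := T) (f := x)
          have h2 := Finset.card_image_le (s := T) (f := y)
          have h3 : T.card ≤ k := by
            have := Finset.card_le_card (Finset.subset_univ T)
            simpa using this
          omega
    obtain ⟨g, hg1, hg2⟩ := sdr_lemma (Finset.univ : Finset (Fin k)) ∅
        (fun _ => Finset.univ \ F) (by
          intro i _
          have : (Finset.univ \ F).card = Fintype.card R - F.card := by
            rw [Finset.card_sdiff_of_subset (Finset.subset_univ F), Finset.card_univ]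
          simp only [Finset.card_empty, Finset.card_univ, Fintype.card_fin]
          omega)
    have hgF : ∀ i, g i ∉ F := fun i => (Finset.mem_sdiff.1 (hg1 i (Finset.mem_univ i)).1).2
    have hginj : ∀ i j : Fin k, i ≠ j → g i ≠ g j := fun i j hij =>
      hg2 i (Finset.mem_univ i) j (Finset.mem_univ j) hij
    set w : Fin k → R := fun i => if i ∈ T then x i else g i with hw'
    set w2 : Fin k → R := fun i => if i ∈ T then y i else g i with hw2'
    have hxF : ∀ i ∈ T, x i ∈ F := fun i hi =>
      Finset.mem_insert_of_mem (Finset.mem_union_left _ (Finset.mem_image_of_mem x hi))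
    have hyF : ∀ i ∈ T, y i ∈ F := fun i hi =>
      Finset.mem_insert_of_mem (Finset.mem_union_right _ (Finset.mem_image_of_mem y hi))
    have hwu : ∀ i, w i ≠ u ∧ w2 i ≠ u := by
      intro i
      by_cases hi : i ∈ T
      · simp only [hw', hw2', if_pos hi]
        exact ⟨(hmemS _).1 (hmem i hi).1, (hmemS _).1 (hmem i hi).2.1⟩
      · simp only [hw', hw2', if_neg hi]
        constructor <;> exact fun h => hgF i (h ▸ Finset.mem_insert_self u _)
    have hcross : ∀ i j : Fin k, i ≠ j →
        w i ≠ w j ∧ w i ≠ w2 j ∧ w2 i ≠ w j ∧ w2 i ≠ w2 j := by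
      intro i j hij
      by_cases hi : i ∈ T <;> by_cases hj : j ∈ T <;>
        simp only [hw', hw2', if_pos, if_neg, hi, hj, if_true, if_false]
      · exact hdisj i hi j hj hij
      · have h1 : ∀ a ∈ F, a ≠ g j := fun a ha h => hgF j (h ▸ ha)
        exact ⟨h1 _ (hxF i hi), h1 _ (hxF i hi), h1 _ (hyF i hi), h1 _ (hyF i hi)⟩
      · have h1 : ∀ a ∈ F, g i ≠ a := fun a ha h => hgF i (h ▸ ha)
        exact ⟨h1 _ (hxF j hj), h1 _ (hyF j hj), h1 _ (hxF j hj), h1 _ (hyF j hj)⟩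
      · exact ⟨hginj i j hij, hginj i j hij, hginj i j hij, hginj i j hij⟩
    have hcount := hyp u w w2 hwu (by
      intro i j hij
      rw [Set.eq_empty_iff_forall_notMem]
      rintro a ⟨ha1, ha2⟩
      obtain ⟨c1, c2, c3, c4⟩ := hcross j i (Ne.symm hij)
      simp only [Set.mem_insert_iff, Set.mem_singleton_iff] at ha1 ha2
      rcases ha2 with rfl | rfl
      · rcases ha1 with h | h | h
        · exact (hwu j).1 h
        · exact c1 h
        · exact c2 h
      · rcases ha1 with h | h | h
        · exact (hwu j).2 h
        · exact c3 h
        · exact c4 h)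
    have hsub : T ⊆ Finset.univ.filter fun i : Fin k =>
        c s(u, w i) + C i (w i) ≠ c s(u, w2 i) + C i (w2 i) := by
      intro i hi
      rw [Finset.mem_filter]
      refine ⟨Finset.mem_univ i, ?_⟩
      simp only [hw', hw2', if_pos hi]
      have := (hmem i hi).2.2
      rwa [hf] at this
    have := Finset.card_le_card hsub
    omega
  set nc : Fin k → Prop := fun i => ∃ x ∈ S, ∃ y ∈ S, f i x ≠ f i y with hnc
  set dm : Fin k → Prop := fun i => ∃ v, (S.filter fun w => f i w ≠ v).card ≤ k with hdm
  set v : Fin k → ZMod p := fun i => if h : dm i then h.choose else 0 with hv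
  set E : Fin k → Finset R := fun i => S.filter fun w => f i w ≠ v i with hE
  have hES : ∀ i, E i ⊆ S := fun i => Finset.filter_subset _ _
  have hEdom : ∀ i, dm i → (E i).card ≤ k := by
    intro i h
    have hs := h.choose_spec
    simp only [hE, hv, dif_pos h]
    convert hs using 2
  have hEval : ∀ i, ∀ z ∈ S, z ∉ E i → f i z = v i := by
    intro i z hz hzE
    by_contra h
    exact hzE (Finset.mem_filter.2 ⟨hz, h⟩)
  have hndm : ∀ i, ¬ dm i → ∀ v', k + 1 ≤ (S.filter fun w => f i w ≠ v').card := by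
    intro i h v'
    by_contra h'
    exact h ⟨v', by omega⟩
  set N : Finset (Fin k) := Finset.univ.filter (fun i => nc i ∧ ¬ dm i) with hN
  set D : Finset (Fin k) := Finset.univ.filter (fun i => nc i ∧ dm i) with hD
  set good : Finset (Fin k × R) → Prop := fun M =>
    (∀ q ∈ M, q.1 ∈ D ∧ q.2 ∈ E q.1) ∧
    ∀ q ∈ M, ∀ r ∈ M, (q.1 = r.1 ↔ q.2 = r.2) with hgood
  obtain ⟨M, hMF, hMmax⟩ := Finset.exists_max_image
    ((Finset.univ : Finset (Finset (Fin k × R))).filter good) Finset.card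
    ⟨∅, Finset.mem_filter.2 ⟨Finset.mem_univ _, by simp [hgood]⟩⟩
  obtain ⟨hM1, hM2⟩ : good M := (Finset.mem_filter.1 hMF).2
  set P : Finset R := M.image Prod.snd with hP
  set T' : Finset (Fin k) := M.image Prod.fst with hT'
  have hmaxcard : ∀ M' : Finset (Fin k × R), good M' → M'.card ≤ M.card := by
    intro M' h
    exact hMmax M' (Finset.mem_filter.2 ⟨Finset.mem_univ _, h⟩)
  have hT'card : T'.card = M.card := Finset.card_image_of_injOn (by
    intro q hq r hr h
    exact Prod.ext h ((hM2 q hq r hr).1 h))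
  have hPcard : P.card ≤ M.card := Finset.card_image_le
  have hT'D : T' ⊆ D := by
    intro i hi
    obtain ⟨q, hq, rfl⟩ := Finset.mem_image.1 hi
    exact (hM1 q hq).1
  have hcover : ∀ i ∈ D, i ∉ T' → E i ⊆ P := by
    intro i hiD hiT' z hz
    by_contra hzP
    have hiz : (i, z) ∉ M := fun h => hiT' (Finset.mem_image.2 ⟨(i,z), h, rfl⟩)
    have hgood' : good (insert (i, z) M) := by
      constructor
      · intro q hq
        rcases Finset.mem_insert.1 hq with rfl | hq
        · exact ⟨hiD, hz⟩
        · exact hM1 q hq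
      · intro q hq r hr
        rcases Finset.mem_insert.1 hq with rfl | hq <;>
          rcases Finset.mem_insert.1 hr with rfl | hr
        · simp
        · exact iff_of_false (fun h => hiT' (Finset.mem_image.2 ⟨r, hr, h.symm⟩))
            (fun h => hzP (Finset.mem_image.2 ⟨r, hr, h.symm⟩))
        · exact iff_of_false (fun h => hiT' (Finset.mem_image.2 ⟨q, hq, h⟩))
            (fun h => hzP (Finset.mem_image.2 ⟨q, hq, h⟩))
        · exact hM2 q hq r hr
    have hc := hmaxcard _ hgood'
    rw [Finset.card_insert_of_notMem hiz] at hc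
    omega
  set xT : Fin k → R := fun i => if h : ∃ a, (i, a) ∈ M then h.choose else u with hxT
  have hxTmem : ∀ i ∈ T', (i, xT i) ∈ M := by
    intro i hi
    obtain ⟨q, hq, hq1⟩ := Finset.mem_image.1 hi
    have h : ∃ a, (i, a) ∈ M := ⟨q.2, by rw [← hq1]; simpa using hq⟩
    simp only [hxT, dif_pos h]
    exact h.choose_spec
  have hxTinj : ∀ i ∈ T', ∀ j ∈ T', xT i = xT j → i = j := by
    intro i hi j hj h
    have h1 := hxTmem i hi
    have h2 := hxTmem j hj
    have := (hM2 _ h1 _ h2).2 (by simpa using h)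
    simpa using this
  have hxTE : ∀ i ∈ T', xT i ∈ E i := fun i hi => (hM1 _ (hxTmem i hi)).2
  have hbound : N.card + T'.card + 1 ≤ K := by
    by_contra hcon
    push_neg at hcon
    have hcon' : K ≤ N.card + T'.card := by omega
    obtain ⟨N₀, hN₀, hN₀card⟩ := Finset.exists_subset_card_eq
      (show min K N.card ≤ N.card from min_le_right _ _)
    obtain ⟨T₀, hT₀, hT₀card⟩ := Finset.exists_subset_card_eq
      (show K - min K N.card ≤ T'.card by omega)
    set X₀ : Finset R := T₀.image xT with hX₀
    have hX₀card : X₀.card ≤ K - min K N.card := hT₀card ▸ Finset.card_image_le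
    have hN₀N : ∀ i ∈ N₀, i ∈ N := fun i hi => hN₀ hi
    obtain ⟨x1, hx1, hx1inj⟩ := sdr_lemma N₀ X₀ (fun _ => S) (by
      intro i hi
      show X₀.card + N₀.card ≤ S.card
      omega)
    obtain ⟨y1, hy1, hy1inj⟩ := sdr_lemma N₀ (X₀ ∪ N₀.image x1)
      (fun i => S.filter fun z => f i z ≠ f i (x1 i)) (by
        intro i hi
        have hiN : ¬ dm i := (Finset.mem_filter.1 (hN₀N i hi)).2.2
        have hb := hndm i hiN (f i (x1 i))
        have h1 : (X₀ ∪ N₀.image x1).card ≤ X₀.card + N₀.card := by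
          have h2 := Finset.card_union_le X₀ (N₀.image x1)
          have h3 : (N₀.image x1).card ≤ N₀.card := Finset.card_image_le
          omega
        show (X₀ ∪ N₀.image x1).card + N₀.card ≤ (S.filter fun z => f i z ≠ f i (x1 i)).card
        omega)
    obtain ⟨y2, hy2, hy2inj⟩ := sdr_lemma T₀ (X₀ ∪ N₀.image x1 ∪ N₀.image y1)
      (fun i => S.filter fun z => f i z = v i) (by
        intro i hi
        have hiD : i ∈ D := hT'D (hT₀ hi)
        have hdmi : dm i := (Finset.mem_filter.1 hiD).2.2
        have hEc := hEdom i hdmi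
        have hEeq : E i = S \ S.filter (fun z => f i z = v i) := by
          simp only [hE]
          ext a
          simp only [Finset.mem_filter, Finset.mem_sdiff, ne_eq]
          tauto
        have hsub2 : S.filter (fun z => f i z = v i) ⊆ S := Finset.filter_subset _ _
        have hsplit : (E i).card = S.card - (S.filter (fun z => f i z = v i)).card := by
          rw [hEeq]
          exact Finset.card_sdiff_of_subset hsub2
        have hfle := Finset.card_le_card hsub2
        have h1 : (X₀ ∪ N₀.image x1 ∪ N₀.image y1).card ≤ X₀.card + N₀.card + N₀.card := by
          have h2 := Finset.card_union_le (X₀ ∪ N₀.image x1) (N₀.image y1)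
          have h3 := Finset.card_union_le X₀ (N₀.image x1)
          have h4 : (N₀.image x1).card ≤ N₀.card := Finset.card_image_le
          have h5 : (N₀.image y1).card ≤ N₀.card := Finset.card_image_le
          omega
        show (X₀ ∪ N₀.image x1 ∪ N₀.image y1).card + T₀.card ≤ (S.filter fun z => f i z = v i).card
        omega)
    have hdisjNT : ∀ i, i ∈ N₀ → i ∈ T₀ → False := by
      intro i hiN hiT
      have h1 := (Finset.mem_filter.1 (hN₀N i hiN)).2.2
      exact h1 (Finset.mem_filter.1 (hT'D (hT₀ hiT))).2.2
    set xx : Fin k → R := fun i => if i ∈ N₀ then x1 i else xT i with hxx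
    set yy : Fin k → R := fun i => if i ∈ N₀ then y1 i else y2 i with hyy
    refine key (N₀ ∪ T₀) xx yy ?_ ?_ ?_
    · have : Disjoint N₀ T₀ := by
        rw [Finset.disjoint_left]
        exact fun {i} hi hj => hdisjNT i hi hj
      rw [Finset.card_union_of_disjoint this]
      omega
    · intro i hi
      rcases Finset.mem_union.1 hi with hi | hi
      · have h1 := (hx1 i hi).1
        have h2 := (hy1 i hi).1
        rw [Finset.mem_filter] at h2
        simp only [hxx, hyy, if_pos hi]
        exact ⟨h1, h2.1, fun h => h2.2 h.symm⟩
      · have hiN : i ∉ N₀ := fun h => hdisjNT i h hi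
        have hiT' : i ∈ T' := hT₀ hi
        have hxE : xT i ∈ E i := hxTE i hiT'
        have h2 := (hy2 i hi).1
        rw [Finset.mem_filter] at h2
        simp only [hxx, hyy, if_neg hiN]
        refine ⟨hES i hxE, h2.1, ?_⟩
        have h3 := (Finset.mem_filter.1 hxE).2
        rw [h2.2]
        exact h3
    · intro i hi j hj hij
      have hx1X : ∀ a ∈ N₀, x1 a ∈ X₀ ∪ N₀.image x1 :=
        fun a ha => Finset.mem_union_right _ (Finset.mem_image_of_mem x1 ha)
      have hx1F3 : ∀ a ∈ N₀, x1 a ∈ X₀ ∪ N₀.image x1 ∪ N₀.image y1 :=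
        fun a ha => Finset.mem_union_left _ (hx1X a ha)
      have hy1F3 : ∀ a ∈ N₀, y1 a ∈ X₀ ∪ N₀.image x1 ∪ N₀.image y1 :=
        fun a ha => Finset.mem_union_right _ (Finset.mem_image_of_mem y1 ha)
      have hxTX : ∀ a ∈ T₀, xT a ∈ X₀ := fun a ha => Finset.mem_image_of_mem xT ha
      have hxTF2 : ∀ a ∈ T₀, xT a ∈ X₀ ∪ N₀.image x1 :=
        fun a ha => Finset.mem_union_left _ (hxTX a ha)
      have hxTF3 : ∀ a ∈ T₀, xT a ∈ X₀ ∪ N₀.image x1 ∪ N₀.image y1 :=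
        fun a ha => Finset.mem_union_left _ (hxTF2 a ha)
      rcases Finset.mem_union.1 hi with hi' | hi' <;> rcases Finset.mem_union.1 hj with hj' | hj'
      · simp only [hxx, hyy, if_pos hi', if_pos hj']
        refine ⟨hx1inj i hi' j hj' hij, ?_, ?_, hy1inj i hi' j hj' hij⟩
        · exact fun h => (hy1 j hj').2 (h ▸ hx1X i hi')
        · exact fun h => (hy1 i hi').2 (h.symm ▸ hx1X j hj')
      · have hjN : j ∉ N₀ := fun h => hdisjNT j h hj'
        simp only [hxx, hyy, if_pos hi', if_neg hjN]
        refine ⟨?_, ?_, ?_, ?_⟩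
        · exact fun h => (hx1 i hi').2 (h ▸ hxTX j hj')
        · exact fun h => (hy2 j hj').2 (h.symm ▸ hx1F3 i hi')
        · exact fun h => (hy1 i hi').2 (h ▸ hxTF2 j hj')
        · exact fun h => (hy2 j hj').2 (h.symm ▸ hy1F3 i hi')
      · have hiN : i ∉ N₀ := fun h => hdisjNT i h hi'
        simp only [hxx, hyy, if_neg hiN, if_pos hj']
        refine ⟨?_, ?_, ?_, ?_⟩
        · exact fun h => (hx1 j hj').2 (h.symm ▸ hxTX i hi')
        · exact fun h => (hy1 j hj').2 (h.symm ▸ hxTF2 i hi')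
        · exact fun h => (hy2 i hi').2 (h ▸ hx1F3 j hj')
        · exact fun h => (hy2 i hi').2 (h ▸ hy1F3 j hj')
      · have hiN : i ∉ N₀ := fun h => hdisjNT i h hi'
        have hjN : j ∉ N₀ := fun h => hdisjNT j h hj'
        simp only [hxx, hyy, if_neg hiN, if_neg hjN]
        refine ⟨?_, ?_, ?_, hy2inj i hi' j hj' hij⟩
        · exact fun h => hij (hxTinj i (hT₀ hi') j (hT₀ hj') h)
        · exact fun h => (hy2 j hj').2 (h.symm ▸ hxTF3 i hi')
        · exact fun h => (hy2 i hi').2 (h ▸ hxTF3 j hj')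
  -- final assembly
  refine ⟨insert u P, Finset.mem_insert_self _ _, ?_, Finset.univ \ (N ∪ T'), ?_, ?_⟩
  · have h1 := Finset.card_insert_le u P
    omega
  · have h1 : (N ∪ T').card ≤ N.card + T'.card := Finset.card_union_le _ _
    have h3 : (Finset.univ \ (N ∪ T')).card = k - (N ∪ T').card := by
      rw [Finset.card_sdiff_of_subset (Finset.subset_univ _), Finset.card_univ, Fintype.card_fin]
    omega
  · intro i hi w hw w' hw'
    show f i w = f i w'
    have hiNT := Finset.mem_sdiff.1 hi
    have hiN : i ∉ N := fun h => hiNT.2 (Finset.mem_union_left _ h)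
    have hiT' : i ∉ T' := fun h => hiNT.2 (Finset.mem_union_right _ h)
    have hwS : w ∈ S := (hmemS w).2 (fun h => hw (h ▸ Finset.mem_insert_self u P))
    have hw'S : w' ∈ S := (hmemS w').2 (fun h => hw' (h ▸ Finset.mem_insert_self u P))
    have hwP : w ∉ P := fun h => hw (Finset.mem_insert_of_mem h)
    have hw'P : w' ∉ P := fun h => hw' (Finset.mem_insert_of_mem h)
    by_cases hnci : nc i
    · have hdmi : dm i := by
        by_contra h
        exact hiN (Finset.mem_filter.2 ⟨Finset.mem_univ _, hnci, h⟩)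
      have hiD : i ∈ D := Finset.mem_filter.2 ⟨Finset.mem_univ _, hnci, hdmi⟩
      have hc := hcover i hiD hiT'
      have e1 : f i w = v i := hEval i w hwS (fun h => hwP (hc h))
      have e2 : f i w' = v i := hEval i w' hw'S (fun h => hw'P (hc h))
      rw [e1, e2]
    · simp only [hnc] at hnci
      push_neg at hnci
      exact hnci w hwS w' hw'S
end

section
/- Let p be a prime and let A_1, …, A_s be nonempty finite subsets of ZMod p such that Σ_{i=1}^{s} (|A_i| − 1) ≥ p − 1. Then the sumset A_1 + A_2 + ⋯ + A_s equals all of ZMod p; that is, every element g ∈ ZMod p can be written as g = a_1 + ⋯ + a_s with a_i ∈ A_i for each i. -/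
open Finset Pointwise

private lemma sum_nonempty {p : ℕ} {n : ℕ} (A : Fin n → Finset (ZMod p))
    (hA : ∀ i, (A i).Nonempty) : (∑ i, A i).Nonempty := by
  induction n with
  | zero => simp
  | succ n ih =>
    rw [Fin.sum_univ_succ]
    exact (hA 0).add (ih _ fun i => hA i.succ)

private lemma card_sum_ge {p : ℕ} (hp : p.Prime) {n : ℕ} (A : Fin n → Finset (ZMod p))
    (hA : ∀ i, (A i).Nonempty) :
    min p (∑ i, ((A i).card - 1) + 1) ≤ (∑ i, A i).card := by
  induction n with
  | zero => simp
  | succ n ih =>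
    rw [Fin.sum_univ_succ, Fin.sum_univ_succ]
    have hne : (∑ i : Fin n, A i.succ).Nonempty :=
      sum_nonempty (fun i => A i.succ) fun i => hA i.succ
    have ih' : min p (∑ i : Fin n, ((A i.succ).card - 1) + 1) ≤ (∑ i : Fin n, A i.succ).card :=
      ih (fun i => A i.succ) (fun i => hA i.succ)
    have hcd : min p ((A 0).card + (∑ i : Fin n, A i.succ).card - 1)
        ≤ (A 0 + ∑ i : Fin n, A i.succ).card := ZMod.cauchy_davenport hp (hA 0) hne
    have h0 : 1 ≤ (A 0).card := (hA 0).card_pos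
    have h1 : 1 ≤ (∑ i : Fin n, A i.succ).card := hne.card_pos
    have he : ∀ i : Fin n, 1 ≤ (A i.succ).card := fun i => (hA i.succ).card_pos
    omega

private lemma mem_sum_extract {p : ℕ} : ∀ {n : ℕ} (A : Fin n → Finset (ZMod p)) (g : ZMod p),
    g ∈ ∑ i, A i → ∃ a : Fin n → ZMod p, (∀ i, a i ∈ A i) ∧ ∑ i, a i = g := by
  intro n
  induction n with
  | zero =>
    intro A g hg
    simp only [Finset.univ_eq_empty, Finset.sum_empty, Finset.mem_zero] at hg
    exact ⟨fun i => i.elim0, fun i => i.elim0, by simp [hg]⟩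
  | succ n ih =>
    intro A g hg
    rw [Fin.sum_univ_succ, Finset.mem_add] at hg
    obtain ⟨x, hx, y, hy, hxy⟩ := hg
    obtain ⟨a, ha, hsum⟩ := ih (fun i => A i.succ) y hy
    refine ⟨Fin.cons x a, ?_, ?_⟩
    · intro i
      refine Fin.cases ?_ ?_ i <;> simp [hx, ha]
    · rw [Fin.sum_univ_succ]
      simpa [hsum] using hxy

theorem stmt_13 (p : ℕ) (hp : p.Prime) (s : ℕ) (A : Fin s → Finset (ZMod p))
    (hA : ∀ i, (A i).Nonempty) (hsum : p - 1 ≤ ∑ i, ((A i).card - 1)) :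
    ∀ g : ZMod p, ∃ a : Fin s → ZMod p, (∀ i, a i ∈ A i) ∧ ∑ i, a i = g := by
  intro g
  have : NeZero p := ⟨hp.pos.ne'⟩
  have hcard : p ≤ (∑ i, A i).card := by
    have := card_sum_ge hp A hA
    have hp1 := hp.one_lt
    omega
  have huniv : (∑ i, A i) = Finset.univ := by
    apply Finset.eq_univ_of_card
    have : (∑ i, A i).card ≤ Fintype.card (ZMod p) := Finset.card_le_univ _
    rw [ZMod.card] at *
    omega
  exact mem_sum_extract A g (huniv ▸ Finset.mem_univ g)
end
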